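/- Let a > 0, θ̃ = (a+1)^2/(a^2+3a+1), τ̃ = a(a+1)/(a^2+3a+1), and let 0 < τ < θ < 1 with (θ,τ) ≠ (θ̃,τ̃). Let φ ∈ C([−1,0]) satisfy φ(t) < 0 on [−1,−θ), φ(−θ) = 0, φ(t) > 0 on (−θ,−τ), φ(−τ) = 0, φ(t) < 0 on (−τ,0), and φ(0) = 0. If x : [−1,∞) → ℝ is a solution of the relay equation ẋ(t) = R(x(t−1)) with initial function φ, then there exists t̃ ≥ 0 such that x(t) = x0(t − t̃) for all t ≥ t̃, where x0 is the T0-periodic function with x0(t) = t on [0,1], x0(t) = −a(t − t0) on [1, t0+1], x0(t) = t − T0 on [t0+1, T0]. -/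

import Mathlib

/-- The relay nonlinearity: `R a x = 1` if `x ≤ 0`, and `R a x = -a` if `x > 0`. -/
noncomputable def R (a x : ℝ) : ℝ := if x ≤ 0 then 1 else -a

/-- `x : [-1,∞) → ℝ` is a solution of the relay equation `x'(t) = R a (x (t-1))`
with initial function `φ ∈ C([-1,0])`: `x` is continuous on `[-1,∞)`, coincides
with `φ` on `[-1,0]`, and for every `t > 0` outside an exceptional set having
finitely many points in each bounded interval, `x` is differentiable at `t` with
`x'(t) = R a (x (t-1))`. -/
def IsSolution (a : ℝ) (φ x : ℝ → ℝ) : Prop :=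
  ContinuousOn x (Set.Ici (-1 : ℝ)) ∧
  (∀ t ∈ Set.Icc (-1 : ℝ) 0, x t = φ t) ∧
  ∃ S : Set ℝ, (∀ A B : ℝ, (S ∩ Set.Icc A B).Finite) ∧
    ∀ t : ℝ, 0 < t → t ∉ S → HasDerivAt x (R a (x (t - 1))) t

/-!
The solution is piecewise linear with slopes `1` and `-a`, the slope on a time interval being
dictated by the sign of `x` one time unit earlier. A zero `w` of `x` preceded by a unit window on
which `x ≤ 0` (`IsNonposZero`) is a phase of the periodic solution, so `x t = x0 (t - w)` for
`t ≥ w`. The initial function instead has a zero at `0` whose window contains a positive pulse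
on `(-θ, -τ)` (`IsPulseZero`). Following the solution for about two time units, either a
nonpositive-window zero appears, or a new zero appears whose window again contains exactly one
positive pulse, with parameters `pulseMap a (θ, τ)`. This affine map expands distances to its
fixed point `(θ̃, τ̃)` by the factor `(a + 1) ^ 2 / a = T0 > 1`, while pulse parameters stay in
the unit square, so pulses can recur only finitely often unless `(θ, τ) = (θ̃, τ̃)`.
-/

open Set

theorem eq_add_mul_sub_of_hasDerivAt_off_countable {f : ℝ → ℝ} {c d k : ℝ} {F : Set ℝ}
    (hF : F.Countable) (hf : ContinuousOn f (Icc c d))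
    (hderiv : ∀ t ∈ Ioo c d \ F, HasDerivAt f k t) :
    ∀ t ∈ Icc c d, f t = f c + k * (t - c) := by
  intro t ht
  have h := MeasureTheory.integral_eq_of_hasDerivAt_off_countable_of_le f (fun _ => k) ht.1 hF
    (hf.mono (Icc_subset_Icc_right ht.2))
    (fun y hy => hderiv y ⟨⟨hy.1.1, hy.1.2.trans_le ht.2⟩, hy.2⟩) intervalIntegrable_const
  rw [intervalIntegral.integral_const, smul_eq_mul] at h
  linarith

theorem R_of_nonpos {a y : ℝ} (hy : y ≤ 0) : R a y = 1 := if_pos hy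

theorem R_of_pos {a y : ℝ} (hy : 0 < y) : R a y = -a := if_neg hy.not_ge

def IsNonposZero (x : ℝ → ℝ) (w : ℝ) : Prop :=
  0 ≤ w ∧ x w = 0 ∧ ∀ t ∈ Ioo (w - 1) w, x t ≤ 0

structure IsPulseZero (x : ℝ → ℝ) (s θ τ : ℝ) : Prop where
  nonneg : 0 ≤ s
  pos : 0 < τ
  lt : τ < θ
  lt_one : θ < 1
  zero : x s = 0
  nonpos_left : ∀ t ∈ Ioo (s - 1) (s - θ), x t ≤ 0
  pos_mid : ∀ t ∈ Ioo (s - θ) (s - τ), 0 < x t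
  nonpos_right : ∀ t ∈ Ioo (s - τ) s, x t ≤ 0

noncomputable def pulseMap (a : ℝ) (p : ℝ × ℝ) : ℝ × ℝ :=
  ((a + 1) ^ 2 * (1 - p.1) / a, ((a + 1) ^ 2 * (1 - p.2) - (a + 1)) / a)

noncomputable def pulseFixedPoint (a : ℝ) : ℝ × ℝ :=
  ((a + 1) ^ 2 / (a ^ 2 + 3 * a + 1), a * (a + 1) / (a ^ 2 + 3 * a + 1))

theorem norm_pulseMap_sub_pulseFixedPoint {a : ℝ} (ha : 0 < a) (p : ℝ × ℝ) :
    ‖pulseMap a p - pulseFixedPoint a‖ = (a + 1) ^ 2 / a * ‖p - pulseFixedPoint a‖ := by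
  have hD : a ^ 2 + 3 * a + 1 ≠ 0 := by positivity
  have h : pulseMap a p - pulseFixedPoint a = -((a + 1) ^ 2 / a) • (p - pulseFixedPoint a) := by
    refine Prod.ext ?_ ?_ <;>
      simp only [pulseMap, pulseFixedPoint, Prod.fst_sub, Prod.snd_sub, Prod.smul_fst,
        Prod.smul_snd, smul_eq_mul] <;> field_simp <;> ring
  rw [h, norm_smul, norm_neg, Real.norm_of_nonneg (by positivity)]

theorem IsPulseZero.norm_sub_pulseFixedPoint_lt_one {a s θ τ : ℝ} {x : ℝ → ℝ} (ha : 0 < a)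
    (hp : IsPulseZero x s θ τ) : ‖(θ, τ) - pulseFixedPoint a‖ < 1 := by
  have hD : 0 < a ^ 2 + 3 * a + 1 := by positivity
  have hθ : (a + 1) ^ 2 / (a ^ 2 + 3 * a + 1) < 1 := by rw [div_lt_one hD]; nlinarith
  have hτ : a * (a + 1) / (a ^ 2 + 3 * a + 1) < 1 := by rw [div_lt_one hD]; nlinarith
  have hθ0 : 0 < (a + 1) ^ 2 / (a ^ 2 + 3 * a + 1) := by positivity
  have hτ0 : 0 < a * (a + 1) / (a ^ 2 + 3 * a + 1) := by positivity
  have := hp.pos; have := hp.lt; have := hp.lt_one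
  simp only [Prod.norm_def, pulseFixedPoint, Prod.fst_sub, Prod.snd_sub, Real.norm_eq_abs]
  exact max_lt (abs_sub_lt_iff.2 ⟨by linarith, by linarith⟩)
    (abs_sub_lt_iff.2 ⟨by linarith, by linarith⟩)

theorem mem_Ioo_of_mul_eq {a θ τ u v : ℝ} (ha : 0 < a) (hθ : θ < 1)
    (hu : a * u = (1 - θ) * (a + 1)) (hv : v = (a + 1) * (θ - τ)) (hτv : 1 - τ < v) :
    u ∈ Ioo (1 - θ) (1 - τ) := by
  subst hv
  constructor <;> nlinarith

namespace IsSolution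

variable {a : ℝ} {φ x : ℝ → ℝ}

theorem eq_add_mul_sub (hx : IsSolution a φ x) {c d k p : ℝ} (hc : 0 ≤ c)
    (hR : ∀ t ∈ Ioo (c - 1) (d - 1), t ≠ p → R a (x t) = k) :
    ∀ t ∈ Icc c d, x t = x c + k * (t - c) := by
  obtain ⟨hcont, -, S, hS, hder⟩ := hx
  refine eq_add_mul_sub_of_hasDerivAt_off_countable
    (((hS c d).countable).union (countable_singleton (p + 1)))
    (hcont.mono fun t ht => by simp only [mem_Ici]; linarith [ht.1]) fun t ht => ?_
  simp only [mem_sdiff, mem_union, mem_inter_iff, mem_singleton_iff, not_or, not_and] at ht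
  obtain ⟨ht, htS, htp⟩ := ht
  rw [← hR (t - 1) ⟨by linarith [ht.1], by linarith [ht.2]⟩ (by contrapose! htp; linarith)]
  exact hder t (hc.trans_lt ht.1) fun h => htS h (Ioo_subset_Icc_self ht)

theorem eq_add_sub_of_nonpos (hx : IsSolution a φ x) {c d : ℝ} (hc : 0 ≤ c)
    (h : ∀ t ∈ Ioo (c - 1) (d - 1), x t ≤ 0) : ∀ t ∈ Icc c d, x t = x c + (t - c) := by
  simpa using hx.eq_add_mul_sub (k := 1) (p := c) hc fun t ht _ => R_of_nonpos (h t ht)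

theorem eq_sub_mul_sub_of_pos (hx : IsSolution a φ x) {c d p : ℝ} (hc : 0 ≤ c)
    (h : ∀ t ∈ Ioo (c - 1) (d - 1), t ≠ p → 0 < x t) :
    ∀ t ∈ Icc c d, x t = x c - a * (t - c) := by
  simpa [sub_eq_add_neg] using
    hx.eq_add_mul_sub (k := -a) hc fun t ht htp => R_of_pos (h t ht htp)

/-- The delayed argument of `x` on `[c, e]` lies either in the given past window or on the line
itself, so the line propagates one time unit at a time. -/
theorem eq_add_mul_sub_of_consistent (hx : IsSolution a φ x) {c e k p : ℝ} (hc : 0 ≤ c)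
    (hpast : ∀ t ∈ Ioo (c - 1) c, t ≠ p → R a (x t) = k)
    (hself : ∀ t ∈ Ico c (e - 1), R a (x c + k * (t - c)) = k) :
    ∀ t ∈ Icc c e, x t = x c + k * (t - c) := by
  have hstep : ∀ n : ℕ, ∀ t ∈ Icc c e, t ≤ c + n → x t = x c + k * (t - c) := by
    intro n
    induction n with
    | zero =>
      intro t ht htn
      obtain rfl : t = c := le_antisymm (by simpa using htn) ht.1
      ring
    | succ n ih =>
      intro t ht htn
      push_cast at htn
      rcases le_or_gt t (c + n) with h | h
      · exact ih t ht h
      have hn : (0 : ℝ) ≤ n := n.cast_nonneg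
      rw [hx.eq_add_mul_sub (k := k) (p := p) (by positivity) (fun y hy hyp => ?_) t ⟨h.le, le_rfl⟩,
        ih _ ⟨by linarith, by linarith [ht.2]⟩ le_rfl]
      · ring
      rcases lt_or_ge y c with hyc | hyc
      · exact hpast y ⟨by linarith [hy.1], hyc⟩ hyp
      · rw [ih y ⟨hyc, by linarith [hy.2, ht.2]⟩ (by linarith [hy.2])]
        exact hself y ⟨hyc, by linarith [hy.2, ht.2]⟩
  intro t ht
  exact hstep ⌈e - c⌉₊ t ht (by linarith [Nat.le_ceil (e - c), ht.2])

theorem eq_add_sub_of_nonpos_window (hx : IsSolution a φ x) {c : ℝ} (hc : 0 ≤ c)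
    (hpast : ∀ t ∈ Ioo (c - 1) c, x t ≤ 0) :
    ∀ t ∈ Icc c (c - x c + 1), x t = x c + (t - c) := by
  intro t ht
  rw [hx.eq_add_mul_sub_of_consistent (e := c - x c + 1) (k := 1) (p := c) hc
    (fun t ht _ => R_of_nonpos (hpast t ht))
    (fun t ht => R_of_nonpos (by linarith [ht.2] : x c + 1 * (t - c) ≤ 0)) t
    ⟨ht.1, by linarith [ht.2]⟩]
  ring

theorem eq_sub_mul_sub_of_pos_window (hx : IsSolution a φ x) (ha : 0 < a) {c p : ℝ}
    (hc : 0 ≤ c) (hpast : ∀ t ∈ Ioo (c - 1) c, t ≠ p → 0 < x t) :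
    ∀ t ∈ Icc c (c + x c / a + 1), x t = x c - a * (t - c) := by
  intro t ht
  rw [hx.eq_add_mul_sub_of_consistent (k := -a) hc (fun t ht htp => R_of_pos (hpast t ht htp))
    (fun t ht => R_of_pos ?_) t ht]
  · ring
  have : a * (t - c) < x c := by
    have := ht.2; rw [← lt_div_iff₀' ha]; linarith
  linarith

theorem isNonposZero_of_nonpos_window (hx : IsSolution a φ x) {c : ℝ} (hc : 0 ≤ c)
    (hxc : x c ≤ 0) (hpast : ∀ t ∈ Ioo (c - 1) c, x t ≤ 0) : IsNonposZero x (c - x c) := by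
  have hlin := hx.eq_add_sub_of_nonpos_window hc hpast
  refine ⟨by linarith [hxc], by rw [hlin _ ⟨by linarith, by linarith⟩]; ring, fun t ht => ?_⟩
  rcases lt_or_ge t c with htc | htc
  · exact hpast t ⟨by linarith [ht.1], htc⟩
  · rw [hlin t ⟨htc, by linarith [ht.2]⟩]; linarith [ht.2]

theorem isNonposZero_of_pos_window (hx : IsSolution a φ x) (ha : 0 < a) {c p : ℝ}
    (hc : 0 ≤ c) (hxc : 0 ≤ x c) (hpast : ∀ t ∈ Ioo (c - 1) c, t ≠ p → 0 < x t) :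
    IsNonposZero x (c + x c / a + 1 + a) := by
  have hlin := hx.eq_sub_mul_sub_of_pos_window ha hc hpast
  have hz : a * (x c / a) = x c := mul_div_cancel₀ _ ha.ne'
  have hz0 : 0 ≤ x c / a := div_nonneg hxc ha.le
  have hend : x (c + x c / a + 1) = -a := by
    rw [hlin _ ⟨by linarith, le_rfl⟩, show c + x c / a + 1 - c = x c / a + 1 by ring, mul_add, hz]
    ring
  have := hx.isNonposZero_of_nonpos_window (c := c + x c / a + 1) (by linarith)
    (by rw [hend]; linarith) fun t ht => ?_
  · rwa [hend, sub_neg_eq_add] at this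
  rw [hlin t ⟨by linarith [ht.1], ht.2.le⟩]
  nlinarith [ht.1]

section Periodic

variable {t0 T0 : ℝ} {x0 : ℝ → ℝ}

theorem eqOn_period_of_isNonposZero (hx : IsSolution a φ x) (ha : 0 < a)
    (ht0 : t0 = (a + 1) / a) (hT0 : T0 = (a + 1) ^ 2 / a)
    (hx0a : ∀ t ∈ Icc (0 : ℝ) 1, x0 t = t)
    (hx0b : ∀ t ∈ Icc (1 : ℝ) (t0 + 1), x0 t = -a * (t - t0))
    (hx0c : ∀ t ∈ Icc (t0 + 1) T0, x0 t = t - T0) {w : ℝ} (hw : IsNonposZero x w) :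
    (∀ t ∈ Icc w (w + T0), x t = x0 (t - w)) ∧ IsNonposZero x (w + T0) := by
  obtain ⟨hw0, hxw, hpast⟩ := hw
  have hat0 : a * t0 = a + 1 := by rw [ht0]; field_simp
  have hT0 : T0 = t0 + 1 + a := by rw [hT0, ht0]; field_simp; ring
  have ht01 : 1 < t0 := by nlinarith
  have hrise : ∀ t ∈ Icc w (w + 1), x t = t - w := fun t ht => by
    rw [hx.eq_add_sub_of_nonpos_window hw0 hpast t (by rwa [hxw, sub_zero]), hxw, zero_add]
  have hx1 : x (w + 1) = 1 := by rw [hrise _ ⟨by linarith, le_rfl⟩]; ring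
  have hfall : ∀ t ∈ Icc (w + 1) (w + t0 + 1), x t = 1 - a * (t - (w + 1)) := by
    have h := hx.eq_sub_mul_sub_of_pos_window (c := w + 1) (p := w) ha (by linarith)
      fun s hs _ => by rw [hrise s ⟨by linarith [hs.1], by linarith [hs.2]⟩]; linarith [hs.1]
    have h1a : 1 / a = t0 - 1 := by rw [ht0]; field_simp; ring
    rwa [hx1, h1a, show w + 1 + (t0 - 1) + 1 = w + t0 + 1 by ring] at h
  have hxt0 : x (w + t0 + 1) = -a := by
    rw [hfall _ ⟨by linarith, le_rfl⟩]; linear_combination -hat0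
  have hrise' : ∀ t ∈ Icc (w + t0 + 1) (w + T0), x t = t - (w + T0) := fun t ht => by
    rw [hx.eq_add_sub_of_nonpos_window (c := w + t0 + 1) (by linarith) (fun s hs => ?_) t
      (by rw [hxt0]; exact ⟨ht.1, by linarith [ht.2]⟩), hxt0, hT0]
    · ring
    rw [hfall s ⟨by linarith [hs.1], hs.2.le⟩]
    nlinarith [hs.1]
  refine ⟨fun t ht => ?_, ?_⟩
  · rcases le_total t (w + 1) with h1 | h1
    · rw [hrise t ⟨ht.1, h1⟩, hx0a _ ⟨by linarith [ht.1], by linarith⟩]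
    rcases le_total t (w + t0 + 1) with h2 | h2
    · rw [hfall t ⟨h1, h2⟩, hx0b _ ⟨by linarith, by linarith⟩]
      linear_combination -hat0
    · rw [hrise' t ⟨h2, ht.2⟩, hx0c _ ⟨by linarith, by linarith [ht.2]⟩]
      ring
  · have := hx.isNonposZero_of_nonpos_window (c := w + t0 + 1) (by linarith)
      (by rw [hxt0]; linarith) fun s hs => by
        rw [hfall s ⟨by linarith [hs.1], hs.2.le⟩]; nlinarith [hs.1]
    rwa [hxt0, show w + t0 + 1 - -a = w + T0 by rw [hT0]; ring] at this

theorem eq_x0_sub_of_isNonposZero (hx : IsSolution a φ x) (ha : 0 < a)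
    (ht0 : t0 = (a + 1) / a) (hT0 : T0 = (a + 1) ^ 2 / a) (hx0per : Function.Periodic x0 T0)
    (hx0a : ∀ t ∈ Icc (0 : ℝ) 1, x0 t = t)
    (hx0b : ∀ t ∈ Icc (1 : ℝ) (t0 + 1), x0 t = -a * (t - t0))
    (hx0c : ∀ t ∈ Icc (t0 + 1) T0, x0 t = t - T0) {w : ℝ} (hw : IsNonposZero x w) :
    ∀ t, w ≤ t → x t = x0 (t - w) := by
  have hperiod := fun {w} (hw : IsNonposZero x w) =>
    hx.eqOn_period_of_isNonposZero ha ht0 hT0 hx0a hx0b hx0c hw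
  have hzero : ∀ n : ℕ, IsNonposZero x (w + n * T0) := by
    intro n
    induction n with
    | zero => simpa using hw
    | succ n ih => simpa [add_mul, add_assoc] using (hperiod ih).2
  have hT0pos : 0 < T0 := by rw [hT0]; positivity
  intro t ht
  set n := ⌊(t - w) / T0⌋₊
  have hn : n * T0 ≤ t - w := (le_div_iff₀ hT0pos).1 (Nat.floor_le (by positivity))
  have hn' : t - w < (n + 1) * T0 := (div_lt_iff₀ hT0pos).1 (Nat.lt_floor_add_one _)
  rw [(hperiod (hzero n)).1 t ⟨by linarith, by linarith⟩, sub_add_eq_sub_sub,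
    (hx0per.nat_mul n).sub_eq]

end Periodic

section Pulse

variable {s θ τ u v : ℝ}

theorem eq_of_isPulseZero (hx : IsSolution a φ x) (hp : IsPulseZero x s θ τ) :
    (∀ t ∈ Icc s (s + 1 - θ), x t = t - s) ∧
    (∀ t ∈ Icc (s + 1 - θ) (s + 1 - τ), x t = 1 - θ - a * (t - (s + 1 - θ))) ∧
    (∀ t ∈ Icc (s + 1 - τ) (s + 1), x t = t - s - (a + 1) * (θ - τ)) := by
  have hθ := hp.lt_one
  have hτθ := hp.lt
  have h1 : ∀ t ∈ Icc s (s + 1 - θ), x t = t - s := fun t ht => by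
    rw [hx.eq_add_sub_of_nonpos hp.nonneg
      (fun y hy => hp.nonpos_left y ⟨hy.1, by linarith [hy.2]⟩) t ht, hp.zero, zero_add]
  have h2 : ∀ t ∈ Icc (s + 1 - θ) (s + 1 - τ), x t = 1 - θ - a * (t - (s + 1 - θ)) :=
    fun t ht => by
      rw [hx.eq_sub_mul_sub_of_pos (p := s) (by linarith [hp.nonneg])
        (fun y hy _ => hp.pos_mid y ⟨by linarith [hy.1], by linarith [hy.2]⟩) t ht,
        h1 _ ⟨by linarith, le_rfl⟩]
      ring
  refine ⟨h1, h2, fun t ht => ?_⟩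
  rw [hx.eq_add_sub_of_nonpos (by linarith [hp.nonneg])
    (fun y hy => hp.nonpos_right y ⟨by linarith [hy.1], by linarith [hy.2]⟩) t ht,
    h2 _ ⟨by linarith, le_rfl⟩]
  ring

theorem sign_of_isPulseZero_of_lt (hx : IsSolution a φ x) (ha : 0 < a)
    (hp : IsPulseZero x s θ τ) (hu : a * u = (1 - θ) * (a + 1)) (hv : v = (a + 1) * (θ - τ))
    (hτv : 1 - τ < v) :
    (∀ t ∈ Ioo s (s + u), 0 < x t) ∧ (∀ t ∈ Ioo (s + u) (s + v), t ≤ s + 1 → x t < 0) ∧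
      (∀ t ∈ Ioc (s + v) (s + 1), 0 < x t) ∧ x (s + 1) = 1 - v := by
  obtain ⟨h1, h2, h3⟩ := hx.eq_of_isPulseZero hp
  obtain ⟨hθu, huτ⟩ := mem_Ioo_of_mul_eq ha hp.lt_one hu hv hτv
  subst hv
  refine ⟨fun t ht => ?_, fun t ht ht1 => ?_, fun t ht => ?_, ?_⟩
  · rcases le_total t (s + 1 - θ) with h | h
    · rw [h1 t ⟨ht.1.le, h⟩]; linarith [ht.1]
    · rw [h2 t ⟨h, by linarith [ht.2]⟩]; nlinarith [ht.2]
  · rcases le_total t (s + 1 - τ) with h | h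
    · rw [h2 t ⟨by linarith [ht.1], h⟩]; nlinarith [ht.1]
    · rw [h3 t ⟨h, ht1⟩]; linarith [ht.2]
  · rw [h3 t ⟨by linarith [ht.1], ht.2⟩]; linarith [ht.1]
  · rw [h3 _ ⟨by linarith [hp.pos], le_rfl⟩]; ring

theorem eq_of_isPulseZero_of_lt (hx : IsSolution a φ x) (ha : 0 < a)
    (hp : IsPulseZero x s θ τ) (hu : a * u = (1 - θ) * (a + 1)) (hv : v = (a + 1) * (θ - τ))
    (hτv : 1 - τ < v) :
    (∀ t ∈ Icc (s + 1) (s + 1 + u), x t = 1 - v - a * (t - (s + 1))) ∧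
      (v < 1 → ∀ t ∈ Icc (s + 1 + u) (s + 1 + v), x t = t - s - v - (a + 1) * u) := by
  obtain ⟨hpos, hneg, -, hx1⟩ := hx.sign_of_isPulseZero_of_lt ha hp hu hv hτv
  have hfall : ∀ t ∈ Icc (s + 1) (s + 1 + u), x t = 1 - v - a * (t - (s + 1)) := fun t ht => by
    rw [hx.eq_sub_mul_sub_of_pos (p := s) (by linarith [hp.nonneg])
      (fun y hy _ => hpos y ⟨by linarith [hy.1], by linarith [hy.2]⟩) t ht, hx1]
  have hu0 : 0 < u := by nlinarith [hp.lt_one]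
  refine ⟨hfall, fun hv1 t ht => ?_⟩
  rw [hx.eq_add_sub_of_nonpos (by linarith [hp.nonneg])
    (fun y hy => (hneg y ⟨by linarith [hy.1], by linarith [hy.2]⟩ (by linarith [hy.2])).le)
    t ht,
    hfall _ ⟨by linarith, le_rfl⟩]
  ring

theorem exists_isNonposZero_of_isPulseZero_of_le (hx : IsSolution a φ x) (ha : 0 < a)
    (hp : IsPulseZero x s θ τ) (hv : (a + 1) * (θ - τ) ≤ 1 - τ) : ∃ w, IsNonposZero x w := by
  obtain ⟨h1, h2, h3⟩ := hx.eq_of_isPulseZero hp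
  have hx1 : x (s + 1) = 1 - (a + 1) * (θ - τ) := by
    rw [h3 _ ⟨by linarith [hp.pos], le_rfl⟩]; ring
  refine ⟨_, hx.isNonposZero_of_pos_window ha (c := s + 1) (p := s + 1 - τ)
    (by linarith [hp.nonneg]) (by rw [hx1]; linarith [hp.pos]) fun t ht htp => ?_⟩
  rcases le_total t (s + 1 - θ) with h | h
  · rw [h1 t ⟨by linarith [ht.1], h⟩]; linarith [ht.1]
  rcases lt_or_gt_of_ne htp with h' | h'
  · rw [h2 t ⟨h, h'.le⟩]; nlinarith
  · rw [h3 t ⟨h'.le, by linarith [ht.2]⟩]; linarith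

theorem exists_isNonposZero_of_isPulseZero_of_one_le (hx : IsSolution a φ x) (ha : 0 < a)
    (hp : IsPulseZero x s θ τ) (hu : a * u = (1 - θ) * (a + 1)) (hv : v = (a + 1) * (θ - τ))
    (hv1 : 1 ≤ v) : ∃ w, IsNonposZero x w := by
  have hτv : 1 - τ < v := by linarith [hp.pos]
  obtain ⟨hu0, -⟩ := mem_Ioo_of_mul_eq ha hp.lt_one hu hv hτv
  obtain ⟨-, hneg, -, -⟩ := hx.sign_of_isPulseZero_of_lt ha hp hu hv hτv
  obtain ⟨hfall, -⟩ := hx.eq_of_isPulseZero_of_lt ha hp hu hv hτv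
  have hθ := hp.lt_one
  refine ⟨_, hx.isNonposZero_of_nonpos_window (c := s + 1 + u) (by linarith [hp.nonneg])
    (by rw [hfall _ ⟨by linarith, le_rfl⟩]; nlinarith) fun t ht => ?_⟩
  rcases lt_or_ge t (s + 1) with h | h
  · exact (hneg t ⟨by linarith [ht.1], by linarith⟩ h.le).le
  · rw [hfall t ⟨h, ht.2.le⟩]; nlinarith

theorem exists_isNonposZero_of_isPulseZero_of_le_one (hx : IsSolution a φ x) (ha : 0 < a)
    (hp : IsPulseZero x s θ τ) (hu : a * u = (1 - θ) * (a + 1)) (hv : v = (a + 1) * (θ - τ))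
    (hτv : 1 - τ < v) (hv1 : v < 1) (huv : a * u + v ≤ 1) : ∃ w, IsNonposZero x w := by
  obtain ⟨hθu, huτ⟩ := mem_Ioo_of_mul_eq ha hp.lt_one hu hv hτv
  obtain ⟨-, -, hpos, -⟩ := hx.sign_of_isPulseZero_of_lt ha hp hu hv hτv
  obtain ⟨hfall, hrise⟩ := hx.eq_of_isPulseZero_of_lt ha hp hu hv hτv
  have hθ := hp.lt_one
  refine ⟨_, hx.isNonposZero_of_pos_window ha (c := s + 1 + v) (p := s + 1 + u)
    (by linarith [hp.nonneg]) (by rw [hrise hv1 _ ⟨by linarith, le_rfl⟩]; nlinarith)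
    fun t ht htp => ?_⟩
  rcases le_total t (s + 1) with h | h
  · exact hpos t ⟨by linarith [ht.1], h⟩
  rcases lt_or_gt_of_ne htp with h' | h'
  · rw [hfall t ⟨h, h'.le⟩]; nlinarith
  · rw [hrise hv1 t ⟨h'.le, by linarith [ht.2]⟩]; nlinarith

theorem exists_isNonposZero_of_isPulseZero_of_one_le_mul (hx : IsSolution a φ x) (ha : 0 < a)
    (hp : IsPulseZero x s θ τ) (hu : a * u = (1 - θ) * (a + 1)) (hv : v = (a + 1) * (θ - τ))
    (hτv : 1 - τ < v) (hv1 : v < 1) (hu1 : 1 ≤ (a + 1) * u) :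
    ∃ w, IsNonposZero x w := by
  obtain ⟨hθu, huτ⟩ := mem_Ioo_of_mul_eq ha hp.lt_one hu hv hτv
  obtain ⟨-, -, hpos, -⟩ := hx.sign_of_isPulseZero_of_lt ha hp hu hv hτv
  obtain ⟨hfall, hrise⟩ := hx.eq_of_isPulseZero_of_lt ha hp hu hv hτv
  obtain ⟨z, hz⟩ : ∃ z, a * (z - (s + 1)) = 1 - v := ⟨s + 1 + (1 - v) / a, by field_simp; ring⟩
  have hz1 : s + 1 < z := by nlinarith
  have hzu : z < s + 1 + u := by nlinarith
  have hfall' : ∀ t ∈ Icc (s + 1 + v) (z + 1),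
      x t = 1 - (a + 1) * u - a * (t - (s + 1 + v)) := fun t ht => by
    rw [hx.eq_sub_mul_sub_of_pos (p := s) (by linarith [hp.nonneg]) (fun y hy _ => ?_) t ht,
      hrise hv1 _ ⟨by linarith, le_rfl⟩]
    · ring
    rcases le_total y (s + 1) with h | h
    · exact hpos y ⟨by linarith [hy.1], h⟩
    · rw [hfall y ⟨h, by linarith [hy.2]⟩]; nlinarith [hy.2]
  refine ⟨_, hx.isNonposZero_of_nonpos_window (c := z + 1) (by linarith [hp.nonneg])
    (by rw [hfall' _ ⟨by linarith, le_rfl⟩]; nlinarith) fun t ht => ?_⟩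
  rcases le_total t (s + 1 + u) with h | h
  · rw [hfall t ⟨by linarith [ht.1], h⟩]; nlinarith [ht.1]
  rcases le_total t (s + 1 + v) with h' | h'
  · rw [hrise hv1 t ⟨h, h'⟩]; linarith
  · rw [hfall' t ⟨h', ht.2.le⟩]; nlinarith

theorem exists_isPulseZero_pulseMap (hx : IsSolution a φ x) (ha : 0 < a)
    (hp : IsPulseZero x s θ τ) (hu : a * u = (1 - θ) * (a + 1)) (hv : v = (a + 1) * (θ - τ))
    (hτv : 1 - τ < v) (hv1 : v < 1) (huv : 1 < a * u + v) (hu1 : (a + 1) * u < 1) :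
    ∃ s' θ' τ', IsPulseZero x s' θ' τ' ∧ (θ', τ') = pulseMap a (θ, τ) := by
  obtain ⟨hθu, huτ⟩ := mem_Ioo_of_mul_eq ha hp.lt_one hu hv hτv
  obtain ⟨-, hneg, hpos, -⟩ := hx.sign_of_isPulseZero_of_lt ha hp hu hv hτv
  obtain ⟨hfall, hrise⟩ := hx.eq_of_isPulseZero_of_lt ha hp hu hv hτv
  obtain ⟨z, hz⟩ : ∃ z, a * (z - (s + 1)) = 1 - v := ⟨s + 1 + (1 - v) / a, by field_simp; ring⟩
  have hz1 : s + 1 < z := by nlinarith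
  have hzu : z < s + 1 + u := by nlinarith
  have hθ := hp.lt_one
  refine ⟨s + (a + 1) * u + v, (a + 1) * u, s + (a + 1) * u + v - z,
    ⟨by nlinarith [hp.nonneg], by nlinarith, by linarith, hu1, ?_, fun t ht => ?_,
      fun t ht => ?_, fun t ht => ?_⟩, ?_⟩
  · rw [hrise hv1 _ ⟨by nlinarith, by nlinarith⟩]; ring
  · exact (hneg t ⟨by nlinarith [ht.1], by linarith [ht.2]⟩ (by linarith [ht.2])).le
  · rcases le_total t (s + 1) with h | h
    · exact hpos t ⟨by linarith [ht.1], h⟩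
    · rw [hfall t ⟨h, by linarith [ht.2]⟩]; nlinarith [ht.2]
  · rcases le_total t (s + 1 + u) with h | h
    · rw [hfall t ⟨by linarith [ht.1], h⟩]; nlinarith [ht.1]
    · rw [hrise hv1 t ⟨h, by nlinarith [ht.2]⟩]; linarith [ht.2]
  · refine Prod.ext ?_ ?_ <;> simp only [pulseMap] <;> rw [eq_div_iff ha.ne']
    · linear_combination (a + 1) * hu
    · linear_combination (a + 1) * hu - hz + (a + 1) * hv

theorem exists_isNonposZero_or_isPulseZero_pulseMap (hx : IsSolution a φ x) (ha : 0 < a)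
    (hp : IsPulseZero x s θ τ) : (∃ w, IsNonposZero x w) ∨
      ∃ s' θ' τ', IsPulseZero x s' θ' τ' ∧ (θ', τ') = pulseMap a (θ, τ) := by
  rcases le_or_gt ((a + 1) * (θ - τ)) (1 - τ) with hτv | hτv
  · exact .inl (hx.exists_isNonposZero_of_isPulseZero_of_le ha hp hτv)
  obtain ⟨u, hu⟩ : ∃ u, a * u = (1 - θ) * (a + 1) := ⟨(1 - θ) * (a + 1) / a, by field_simp⟩
  rcases le_or_gt 1 ((a + 1) * (θ - τ)) with hv1 | hv1
  · exact .inl (hx.exists_isNonposZero_of_isPulseZero_of_one_le ha hp hu rfl hv1)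
  rcases le_or_gt 1 ((a + 1) * u) with hu1 | hu1
  · exact .inl (hx.exists_isNonposZero_of_isPulseZero_of_one_le_mul ha hp hu rfl hτv hv1 hu1)
  rcases le_or_gt (a * u + (a + 1) * (θ - τ)) 1 with huv | huv
  · exact .inl (hx.exists_isNonposZero_of_isPulseZero_of_le_one ha hp hu rfl hτv hv1 huv)
  · exact .inr (hx.exists_isPulseZero_pulseMap ha hp hu rfl hτv hv1 huv hu1)

end Pulse

theorem exists_isNonposZero_of_isPulseZero {s θ τ : ℝ} (hx : IsSolution a φ x) (ha : 0 < a)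
    (hp : IsPulseZero x s θ τ) (hne : (θ, τ) ≠ pulseFixedPoint a) : ∃ w, IsNonposZero x w := by
  have hT : 1 < (a + 1) ^ 2 / a := by rw [lt_div_iff₀ ha]; nlinarith
  have key : ∀ n : ℕ, ∀ s θ τ, IsPulseZero x s θ τ →
      1 ≤ ((a + 1) ^ 2 / a) ^ n * ‖(θ, τ) - pulseFixedPoint a‖ → ∃ w, IsNonposZero x w := by
    intro n
    induction n with
    | zero =>
      intro s θ τ hp h
      linarith [hp.norm_sub_pulseFixedPoint_lt_one ha, one_mul ‖(θ, τ) - pulseFixedPoint a‖]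
    | succ n ih =>
      intro s θ τ hp h
      obtain hw | ⟨s', θ', τ', hp', hθτ⟩ :=
        hx.exists_isNonposZero_or_isPulseZero_pulseMap ha hp
      · exact hw
      refine ih s' θ' τ' hp' ?_
      rw [hθτ, norm_pulseMap_sub_pulseFixedPoint ha, ← mul_assoc, ← pow_succ]
      exact h
  have hd : 0 < ‖(θ, τ) - pulseFixedPoint a‖ := norm_pos_iff.2 (sub_ne_zero.2 hne)
  obtain ⟨n, hn⟩ := pow_unbounded_of_one_lt (1 / ‖(θ, τ) - pulseFixedPoint a‖) hT
  exact key n s θ τ hp ((div_lt_iff₀ hd).1 hn).le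

end IsSolution

theorem stmt_8_general (a : ℝ) (ha : 0 < a) (θt τt : ℝ)
    (hθt : θt = (a + 1) ^ 2 / (a ^ 2 + 3 * a + 1))
    (hτt : τt = a * (a + 1) / (a ^ 2 + 3 * a + 1))
    (θ τ : ℝ) (hτθ : 0 < τ ∧ τ < θ ∧ θ < 1) (hne : (θ, τ) ≠ (θt, τt))
    (t0 T0 : ℝ) (ht0 : t0 = (a + 1) / a) (hT0 : T0 = (a + 1) ^ 2 / a)
    (φ : ℝ → ℝ)
    (hφ1 : ∀ t ∈ Set.Ico (-1 : ℝ) (-θ), φ t < 0)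
    (hφ2 : ∀ t ∈ Set.Ioo (-θ) (-τ), 0 < φ t)
    (hφ3 : ∀ t ∈ Set.Ioo (-τ) (0 : ℝ), φ t < 0) (hφ0 : φ 0 = 0)
    (x : ℝ → ℝ) (hx : IsSolution a φ x)
    (x0 : ℝ → ℝ)
    (hx0per : ∀ t : ℝ, x0 (t + T0) = x0 t)
    (hx0a : ∀ t ∈ Set.Icc (0 : ℝ) 1, x0 t = t)
    (hx0b : ∀ t ∈ Set.Icc (1 : ℝ) (t0 + 1), x0 t = -a * (t - t0))
    (hx0c : ∀ t ∈ Set.Icc (t0 + 1) T0, x0 t = t - T0) :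
    ∃ tt : ℝ, 0 ≤ tt ∧ ∀ t : ℝ, tt ≤ t → x t = x0 (t - tt) := by
  obtain ⟨hτ, hτθ, hθ⟩ := hτθ
  have hxφ : ∀ t, -1 ≤ t → t ≤ 0 → x t = φ t := fun t h1 h2 => hx.2.1 t ⟨h1, h2⟩
  have hp : IsPulseZero x 0 θ τ :=
    ⟨le_rfl, hτ, hτθ, hθ, by rw [hxφ 0 (by norm_num) le_rfl, hφ0],
      fun t ht => by
        rw [hxφ t (by linarith [ht.1]) (by linarith [ht.2])]
        exact (hφ1 t ⟨by linarith [ht.1], by linarith [ht.2]⟩).le,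
      fun t ht => by
        rw [hxφ t (by linarith [ht.1]) (by linarith [ht.2])]
        exact hφ2 t ⟨by linarith [ht.1], by linarith [ht.2]⟩,
      fun t ht => by
        rw [hxφ t (by linarith [ht.1]) (by linarith [ht.2])]
        exact (hφ3 t ⟨by linarith [ht.1], by linarith [ht.2]⟩).le⟩
  subst hθt hτt
  obtain ⟨w, hw⟩ := hx.exists_isNonposZero_of_isPulseZero ha hp hne
  exact ⟨w, hw.1, hx.eq_x0_sub_of_isNonposZero ha ht0 hT0 hx0per hx0a hx0b hx0c hw⟩

/-- for `0 < τ < θ < 1` with `(θ,τ) ≠ (θ̃,τ̃)`, a solution with an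
initial function having zeros exactly at `-θ`, `-τ` and `0` (with the indicated
signs in between) eventually coincides with a time shift of the `T0`-periodic
solution `x0`: there is `t̃ ≥ 0` with `x t = x0 (t - t̃)` for all `t ≥ t̃`. -/
theorem stmt_8 (a : ℝ) (ha : 0 < a) (θt τt : ℝ)
    (hθt : θt = (a + 1) ^ 2 / (a ^ 2 + 3 * a + 1))
    (hτt : τt = a * (a + 1) / (a ^ 2 + 3 * a + 1))
    (θ τ : ℝ) (hτθ : 0 < τ ∧ τ < θ ∧ θ < 1) (hne : (θ, τ) ≠ (θt, τt))
    (t0 T0 : ℝ) (ht0 : t0 = (a + 1) / a) (hT0 : T0 = (a + 1) ^ 2 / a)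
    (φ : ℝ → ℝ) (hφc : ContinuousOn φ (Set.Icc (-1 : ℝ) 0))
    (hφ1 : ∀ t ∈ Set.Ico (-1 : ℝ) (-θ), φ t < 0) (hφθ : φ (-θ) = 0)
    (hφ2 : ∀ t ∈ Set.Ioo (-θ) (-τ), 0 < φ t) (hφτ : φ (-τ) = 0)
    (hφ3 : ∀ t ∈ Set.Ioo (-τ) (0 : ℝ), φ t < 0) (hφ0 : φ 0 = 0)
    (x : ℝ → ℝ) (hx : IsSolution a φ x)
    (x0 : ℝ → ℝ)
    (hx0per : ∀ t : ℝ, x0 (t + T0) = x0 t)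
    (hx0a : ∀ t ∈ Set.Icc (0 : ℝ) 1, x0 t = t)
    (hx0b : ∀ t ∈ Set.Icc (1 : ℝ) (t0 + 1), x0 t = -a * (t - t0))
    (hx0c : ∀ t ∈ Set.Icc (t0 + 1) T0, x0 t = t - T0) :
    ∃ tt : ℝ, 0 ≤ tt ∧ ∀ t : ℝ, tt ≤ t → x t = x0 (t - tt) :=
  stmt_8_general a ha θt τt hθt hτt θ τ hτθ hne t0 T0 ht0 hT0 φ hφ1 hφ2 hφ3 hφ0 x hx x0 hx0per hx0a
    hx0b hx0c
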